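/- Define φ₂(x) := 2·∫₀ˣ e^{t₂²} ∫₀^{t₂} e^{-u₂²} ∫₀^{u₂} e^{t₁²} dt₁ du₂ dt₂. Then φ₂ is an odd function and φ₂(x) = Σ_{n=0}^∞ (x^{2n+3}/((n+1)!·(2n+3)))·Σ_{k=0}^n 1/(2k+1) for all real x. -/

import Mathlib

open Real intervalIntegral

noncomputable def phi2 (x : ℝ) : ℝ :=
  2 * ∫ t₂ in (0 : ℝ)..x, Real.exp (t₂ ^ 2) *
        ∫ u₂ in (0 : ℝ)..t₂, Real.exp (-u₂ ^ 2) *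
          ∫ t₁ in (0 : ℝ)..u₂, Real.exp (t₁ ^ 2)

/-! Write `Hₙ = ∑_{k ≤ n} 1/(2k+1)` (`oddHarmonic`), `F x = ∫₀ˣ e^{t²} = ∑ x^{2n+1} / (n! (2n+1))`
and `ψ x = ∑ Hₙ x^{2n+2} / (n+1)!` (`phi2Deriv`). The recurrence `H_{n+1} = Hₙ + 1/(2n+3)` gives
`ψ' = 2xψ + 2F`, i.e. `(e^{-x²} ψ)' = 2 e^{-x²} F`. Hence the two inner integrals of `φ₂` equal
`e^{-x²} ψ / 2`, so `φ₂ = ∫₀ˣ ψ`, and integrating term by term gives the series, which has only odd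
powers. -/

section EntireSeries

variable {a : ℕ → ℝ} {k : ℕ → ℕ}

theorem summable_mul_pow_succ
    (ha : ∀ R ≥ (0 : ℝ), Summable fun n => |a n| * (k n + 1) * R ^ k n) (x : ℝ) :
    Summable fun n => a n * x ^ (k n + 1) := by
  refine .of_norm_bounded ((ha |x| (abs_nonneg x)).mul_left |x|) fun n => ?_
  calc ‖a n * x ^ (k n + 1)‖ = |x| * (|a n| * 1 * |x| ^ k n) := by
        rw [norm_mul, norm_pow, Real.norm_eq_abs, Real.norm_eq_abs, pow_succ]
        ring
    _ ≤ |x| * (|a n| * (k n + 1) * |x| ^ k n) := by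
        gcongr
        linarith [(k n).cast_nonneg (α := ℝ)]

theorem hasDerivAt_tsum_mul_pow_succ
    (ha : ∀ R ≥ (0 : ℝ), Summable fun n => |a n| * (k n + 1) * R ^ k n) (x : ℝ) :
    HasDerivAt (fun y => ∑' n, a n * y ^ (k n + 1)) (∑' n, a n * (k n + 1) * x ^ k n) x := by
  have hR : (0 : ℝ) < |x| + 1 := by positivity
  refine hasDerivAt_tsum_of_isPreconnected (y₀ := 0) (y := x)
    (g' := fun n y => a n * (k n + 1) * y ^ k n) (ha _ hR.le) Metric.isOpen_ball
    (convex_ball (0 : ℝ) (|x| + 1)).isPreconnected (fun n y _ => ?_) (fun n y hy => ?_)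
    (Metric.mem_ball_self hR) (by simp) (by simp)
  · simpa [mul_assoc] using ((hasDerivAt_pow (k n + 1) y).const_mul (a n))
  · rw [mem_ball_zero_iff, Real.norm_eq_abs] at hy
    rw [norm_mul, norm_mul, norm_pow, Real.norm_eq_abs, Real.norm_eq_abs, Real.norm_eq_abs,
      abs_of_nonneg (by positivity : (0 : ℝ) ≤ k n + 1)]
    gcongr

theorem hasSum_mul_pow_succ_integral
    (ha : ∀ R ≥ (0 : ℝ), Summable fun n => |a n| * (k n + 1) * R ^ k n)
    {f : ℝ → ℝ} (hf : Continuous f) (hf' : ∀ t, HasSum (fun n => a n * (k n + 1) * t ^ k n) (f t))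
    (x : ℝ) : HasSum (fun n => a n * x ^ (k n + 1)) (∫ t in 0..x, f t) := by
  rw [integral_eq_sub_of_hasDerivAt (fun t _ => (hf' t).tsum_eq ▸ hasDerivAt_tsum_mul_pow_succ ha t)
    (hf.intervalIntegrable _ _)]
  simpa using (summable_mul_pow_succ ha x).hasSum

end EntireSeries

open scoped Nat

theorem hasSum_exp_sq (t : ℝ) : HasSum (fun n : ℕ => t ^ (2 * n) / n !) (exp (t ^ 2)) := by
  simpa [← Real.exp_eq_exp_ℝ, pow_mul] using NormedSpace.expSeries_div_hasSum_exp (t ^ 2)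

theorem hasSum_integral_exp_sq (x : ℝ) :
    HasSum (fun n : ℕ => ((n ! : ℝ) * (2 * n + 1))⁻¹ * x ^ (2 * n + 1))
      (∫ t in 0..x, exp (t ^ 2)) := by
  have hcoeff (n : ℕ) : ((n ! : ℝ) * (2 * n + 1))⁻¹ * ((2 * n : ℕ) + 1) = (n ! : ℝ)⁻¹ := by
    push_cast
    field_simp
  refine hasSum_mul_pow_succ_integral (k := fun n => 2 * n) (fun R _ => ?_) (by fun_prop)
    (fun t => ?_) x
  · refine (Real.summable_pow_div_factorial (R ^ 2)).congr fun n => ?_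
    rw [abs_of_nonneg (by positivity), hcoeff, pow_mul]
    ring
  · convert hasSum_exp_sq t using 2 with n
    rw [hcoeff, div_eq_inv_mul]

noncomputable def oddHarmonic (n : ℕ) : ℝ := ∑ k ∈ Finset.range (n + 1), (1 : ℝ) / (2 * k + 1)

theorem oddHarmonic_nonneg (n : ℕ) : 0 ≤ oddHarmonic n :=
  Finset.sum_nonneg fun _ _ => by positivity

theorem oddHarmonic_le_two_pow (n : ℕ) : oddHarmonic n ≤ 2 ^ n :=
  calc oddHarmonic n ≤ ∑ _k ∈ Finset.range (n + 1), (1 : ℝ) :=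
        Finset.sum_le_sum fun k _ => by
          rw [div_le_one (by positivity)]
          linarith [k.cast_nonneg (α := ℝ)]
    _ = n + 1 := by simp
    _ ≤ 2 ^ n := by exact_mod_cast Nat.lt_two_pow_self

theorem oddHarmonic_succ (n : ℕ) :
    oddHarmonic (n + 1) = oddHarmonic n + 1 / (2 * (n + 1 : ℕ) + 1) :=
  Finset.sum_range_succ _ _

noncomputable def phi2Deriv (x : ℝ) : ℝ :=
  ∑' n : ℕ, oddHarmonic n / (n + 1)! * x ^ (2 * n + 1 + 1)

theorem summable_phi2Deriv_majorant (R : ℝ) (hR : 0 ≤ R) :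
    Summable fun n : ℕ =>
      |oddHarmonic n / (n + 1)!| * (((2 * n + 1 : ℕ) : ℝ) + 1) * R ^ (2 * n + 1) := by
  refine .of_nonneg_of_le (fun n => by positivity) (fun n => ?_)
    ((Real.summable_pow_div_factorial (2 * R ^ 2)).mul_left (2 * R))
  have hn : (n ! : ℝ) ≠ 0 := by positivity
  calc |oddHarmonic n / (n + 1)!| * (((2 * n + 1 : ℕ) : ℝ) + 1) * R ^ (2 * n + 1)
      = 2 * R * (oddHarmonic n * (R ^ 2) ^ n / n !) := by
        rw [abs_of_nonneg (by have := oddHarmonic_nonneg n; positivity), Nat.factorial_succ]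
        push_cast
        field_simp
        ring
    _ ≤ 2 * R * (2 ^ n * (R ^ 2) ^ n / n !) := by gcongr; exact oddHarmonic_le_two_pow n
    _ = 2 * R * ((2 * R ^ 2) ^ n / n !) := by rw [mul_pow]

theorem hasSum_deriv_phi2Deriv (x : ℝ) :
    HasSum
      (fun n : ℕ => oddHarmonic n / (n + 1)! * (((2 * n + 1 : ℕ) : ℝ) + 1) * x ^ (2 * n + 1))
      (2 * x * phi2Deriv x + 2 * ∫ t in 0..x, exp (t ^ 2)) := by
  have hB : HasSum (fun n : ℕ => 2 * x * (oddHarmonic n / (n + 1)! * x ^ (2 * n + 1 + 1)))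
      (2 * x * phi2Deriv x) :=
    (summable_mul_pow_succ (k := fun n => 2 * n + 1) summable_phi2Deriv_majorant x).hasSum
      |>.mul_left _
  have hF := (hasSum_integral_exp_sq x).mul_left 2
  set d : ℕ → ℝ := fun n =>
    oddHarmonic n / (n + 1)! * (((2 * n + 1 : ℕ) : ℝ) + 1) * x ^ (2 * n + 1)
      - 2 * (((n ! : ℝ) * (2 * n + 1))⁻¹ * x ^ (2 * n + 1))
  have hshift :
      (fun n => d (n + 1)) = fun n => 2 * x * (oddHarmonic n / (n + 1)! * x ^ (2 * n + 1 + 1)) := by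
    funext n
    have hn : (n ! : ℝ) ≠ 0 := by positivity
    simp only [d, oddHarmonic_succ, Nat.factorial_succ]
    push_cast
    field_simp
    ring
  have hd0 : d 0 = 0 := by simp [d, oddHarmonic]; ring
  have hd : HasSum d (2 * x * phi2Deriv x) := by
    rw [← hasSum_nat_add_iff' 1, Finset.sum_range_one, hd0, sub_zero, hshift]
    exact hB
  convert hd.add hF using 2 with n
  simp only [d, sub_add_cancel]

theorem hasDerivAt_phi2Deriv (x : ℝ) :
    HasDerivAt phi2Deriv (2 * x * phi2Deriv x + 2 * ∫ t in 0..x, exp (t ^ 2)) x := by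
  have h := hasDerivAt_tsum_mul_pow_succ (k := fun n => 2 * n + 1) summable_phi2Deriv_majorant x
  rwa [(hasSum_deriv_phi2Deriv x).tsum_eq] at h

theorem continuous_phi2Deriv : Continuous phi2Deriv :=
  continuous_iff_continuousAt.2 fun x => (hasDerivAt_phi2Deriv x).continuousAt

theorem phi2Deriv_zero : phi2Deriv 0 = 0 := by simp [phi2Deriv]

theorem hasDerivAt_exp_neg_sq_mul_phi2Deriv (x : ℝ) :
    HasDerivAt (fun u => exp (-u ^ 2) * phi2Deriv u)
      (2 * (exp (-x ^ 2) * ∫ t in 0..x, exp (t ^ 2))) x := by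
  refine ((hasDerivAt_pow 2 x).fun_neg.exp.fun_mul (hasDerivAt_phi2Deriv x)).congr_deriv ?_
  push_cast
  ring

theorem integral_exp_neg_sq_mul_integral_exp_sq (x : ℝ) :
    ∫ u in 0..x, exp (-u ^ 2) * ∫ t in 0..u, exp (t ^ 2) = exp (-x ^ 2) * phi2Deriv x / 2 := by
  have hF : Continuous fun u => ∫ t in 0..u, exp (t ^ 2) :=
    continuous_primitive
      (fun _ _ => (by fun_prop : Continuous fun t : ℝ => exp (t ^ 2)).intervalIntegrable _ _) 0
  have hF' : Continuous fun u => 2 * (exp (-u ^ 2) * ∫ t in 0..u, exp (t ^ 2)) := by fun_prop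
  have h := integral_eq_sub_of_hasDerivAt (fun u _ => hasDerivAt_exp_neg_sq_mul_phi2Deriv u)
    (hF'.intervalIntegrable 0 x)
  rw [intervalIntegral.integral_const_mul, phi2Deriv_zero, mul_zero, sub_zero] at h
  linarith

theorem phi2_eq_integral_phi2Deriv (x : ℝ) : phi2 x = ∫ t in 0..x, phi2Deriv t := by
  rw [phi2, ← intervalIntegral.integral_const_mul]
  refine intervalIntegral.integral_congr fun t _ => ?_
  simp only [integral_exp_neg_sq_mul_integral_exp_sq]
  rw [mul_div_assoc', ← mul_assoc, ← exp_add, add_neg_cancel, exp_zero]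
  ring

theorem summable_phi2_majorant (R : ℝ) (hR : 0 ≤ R) :
    Summable fun n : ℕ => |oddHarmonic n / ((n + 1)! * (2 * n + 3))|
      * (((2 * n + 2 : ℕ) : ℝ) + 1) * R ^ (2 * n + 2) := by
  refine .of_nonneg_of_le (fun n => by positivity) (fun n => ?_)
    ((Real.summable_pow_div_factorial (2 * R ^ 2)).mul_left (R ^ 2))
  calc |oddHarmonic n / ((n + 1)! * (2 * n + 3))| * (((2 * n + 2 : ℕ) : ℝ) + 1) * R ^ (2 * n + 2)
      = R ^ 2 * (oddHarmonic n * (R ^ 2) ^ n / (n + 1)!) := by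
        rw [abs_of_nonneg (by have := oddHarmonic_nonneg n; positivity)]
        push_cast
        field_simp
        ring
    _ ≤ R ^ 2 * (2 ^ n * (R ^ 2) ^ n / n !) := by
        gcongr
        · exact oddHarmonic_le_two_pow n
        · exact n.le_succ
    _ = R ^ 2 * ((2 * R ^ 2) ^ n / n !) := by rw [mul_pow]

theorem hasSum_phi2 (x : ℝ) :
    HasSum (fun n : ℕ =>
        x ^ (2 * n + 3) / (((n + 1).factorial : ℝ) * (2 * n + 3))
          * ∑ k ∈ Finset.range (n + 1), (1 : ℝ) / (2 * k + 1))
      (phi2 x) := by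
  have hphi2Deriv (t : ℝ) : HasSum (fun n : ℕ => oddHarmonic n / ((n + 1)! * (2 * n + 3))
      * (((2 * n + 2 : ℕ) : ℝ) + 1) * t ^ (2 * n + 2)) (phi2Deriv t) := by
    rw [phi2Deriv]
    convert (summable_mul_pow_succ (k := fun n => 2 * n + 1) summable_phi2Deriv_majorant t).hasSum
      using 2 with n
    push_cast
    field_simp
    ring_nf
  have h := hasSum_mul_pow_succ_integral summable_phi2_majorant continuous_phi2Deriv hphi2Deriv x
  rw [← phi2_eq_integral_phi2Deriv] at h
  convert h using 2 with n
  rw [oddHarmonic]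
  ring

theorem phi2_odd_and_series (x : ℝ) :
    phi2 (-x) = -phi2 x ∧
    HasSum (fun n : ℕ =>
        x ^ (2 * n + 3) / (((n + 1).factorial : ℝ) * (2 * n + 3))
          * ∑ k ∈ Finset.range (n + 1), (1 : ℝ) / (2 * k + 1))
      (phi2 x) := by
  refine ⟨?_, hasSum_phi2 x⟩
  have h := hasSum_phi2 (-x)
  simp only [fun n : ℕ => (Odd.neg_pow ⟨n + 1, by ring⟩ x : (-x) ^ (2 * n + 3) = _), neg_div,
    neg_mul] at h
  exact h.unique (hasSum_phi2 x).neg
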